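/- arXiv:hep-th/0010184 — 5 statements merged into one kernel-verified Lean document; each statement's English description precedes it below -/
import Mathlib

section
/- Let N ≥ 2 and let q, p : ℝ → ℝ^N be differentiable with q̇_k = p_k. Define c_k = exp((q_k − q_{k+1})/2) for 0 ≤ k ≤ N−2, c_{N−1} = Π_{n=0}^{N−2} c_n^{−1} = exp((q_{N−1} − q_0)/2), v_k = −p_k, and for w ∈ ℂ let L(w) be the matrix obtained from the Jacobi matrix L_0 (diagonal v_k, off-diagonals c_k) by adding the entry w·c_{N−1} in position (N−1, 0), and let A(w) be obtained from A_0 (zero diagonal, (A_0)_{k,k+1} = c_k/2, (A_0)_{k+1,k} = −c_k/2) by adding the entry (1/2)·w·c_{N−1} in position (N−1, 0). Then (q,p) satisfies the open Toda lattice equations if and only if ∂_t L(w)(t) = [A(w)(t), L(w)(t)] holds for every w ∈ ℂ and every t. -/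
/-!
Write `D = diag(v)`, `U` for the matrix with `c_k` at `(k, k+1)` and `E` for the matrix with
`c_{N-1}` at `(N-1, 0)`, so that `L(w) = D + U + Uᵀ + w E` and `A(w) = ½(U - Uᵀ) + (w/2) E`.
Expanding, `[A, L] = [U, Uᵀ] + ½[U - Uᵀ, D] + (w/2)[E, D] + w(EUᵀ - UᵀE)`. The last term
vanishes because `Uᵀ` has no entry in row `0` or column `N-1`, `[E, D] = (v_0 - v_{N-1}) E`, and
`[U, Uᵀ]` is diagonal with entries `c_k² - c_{k-1}²`. Hence the off-diagonal entries of the Lax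
equation say `ċ_k = c_k (v_{k+1} - v_k)/2` (indices cyclic), which is `q̇ = p`, and the diagonal
entries say `v̇_k = c_k² - c_{k-1}²`, which is the open Toda system since
`c_k² = e^{q_k - q_{k+1}}`.
-/

theorem hasDerivAt_ite_zero {𝕜 F : Type*} [NontriviallyNormedField 𝕜] [NormedAddCommGroup F]
    [NormedSpace 𝕜 F] {f : 𝕜 → F} {f' : F} {x : 𝕜} (P : Prop) [Decidable P]
    (hf : P → HasDerivAt f f' x) :
    HasDerivAt (fun y => if P then f y else 0) (if P then f' else 0) x := by
  by_cases hP : P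
  · simpa only [if_pos hP] using hf hP
  · simpa only [if_neg hP] using hasDerivAt_const x (0 : F)

theorem hasDerivAt_neg_iff {𝕜 F : Type*} [NontriviallyNormedField 𝕜] [NormedAddCommGroup F]
    [NormedSpace 𝕜 F] {f : 𝕜 → F} {f' : F} {x : 𝕜} :
    HasDerivAt (fun y => -f y) f' x ↔ HasDerivAt f (-f') x :=
  ⟨fun h => by simpa only [Pi.neg_def, neg_neg] using h.neg,
    fun h => by simpa only [Pi.neg_def, neg_neg] using h.neg⟩

theorem hasDerivAt_ofReal_comp_iff {f : ℝ → ℝ} {u x : ℝ} :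
    HasDerivAt (fun y => (f y : ℂ)) (u : ℂ) x ↔ HasDerivAt f u x :=
  ⟨fun h => by simpa [Function.comp_def] using Complex.reCLM.hasFDerivAt.comp_hasDerivAt x h,
    HasDerivAt.ofReal_comp⟩

namespace OpenToda

open Matrix

theorem laxPair_commutator_expand {R : Type*} [Ring R] [Algebra ℂ R] (D U V E : R) (w : ℂ) :
    ((1 / 2 : ℂ) • (U - V) + (w / 2) • E) * (D + U + V + w • E)
        - (D + U + V + w • E) * ((1 / 2 : ℂ) • (U - V) + (w / 2) • E) =
      (U * V - V * U) + (1 / 2 : ℂ) • ((U - V) * D - D * (U - V))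
        + (w / 2) • (E * D - D * E) + w • (E * V - V * E) := by
  simp only [mul_add, add_mul, mul_sub, sub_mul, smul_mul_assoc, mul_smul_comm, smul_add, smul_sub,
    smul_smul]
  module

variable {N : ℕ}

noncomputable def laxL (N : ℕ) (c v : ℕ → ℝ) (w : ℂ) : Matrix (Fin N) (Fin N) ℂ :=
  Matrix.of fun i j =>
    (if (i : ℕ) = (j : ℕ) then (v i : ℂ) else
      if (i : ℕ) + 1 = (j : ℕ) then (c i : ℂ) else
      if (j : ℕ) + 1 = (i : ℕ) then (c j : ℂ) else 0) +
    (if (i : ℕ) = N - 1 ∧ (j : ℕ) = 0 then w * (c (N - 1) : ℂ) else 0)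

noncomputable def laxA (N : ℕ) (c : ℕ → ℝ) (w : ℂ) : Matrix (Fin N) (Fin N) ℂ :=
  Matrix.of fun i j =>
    (if (i : ℕ) + 1 = (j : ℕ) then (c i : ℂ) / 2 else
      if (j : ℕ) + 1 = (i : ℕ) then -(c j : ℂ) / 2 else 0) +
    (if (i : ℕ) = N - 1 ∧ (j : ℕ) = 0 then (1 / 2 : ℂ) * w * (c (N - 1) : ℂ) else 0)

noncomputable def superdiag (N : ℕ) (c : ℕ → ℝ) : Matrix (Fin N) (Fin N) ℂ :=
  Matrix.of fun i j => if (i : ℕ) + 1 = j then (c i : ℂ) else 0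

noncomputable def corner (N : ℕ) (c : ℕ → ℝ) : Matrix (Fin N) (Fin N) ℂ :=
  Matrix.of fun i j => if (i : ℕ) = N - 1 ∧ (j : ℕ) = 0 then (c (N - 1) : ℂ) else 0

def todaForce (N : ℕ) (c : ℕ → ℝ) (k : ℕ) : ℝ :=
  (if k + 1 < N then c k ^ 2 else 0) - (if 0 < k then c (k - 1) ^ 2 else 0)

theorem laxL_eq (c v : ℕ → ℝ) (w : ℂ) :
    laxL N c v w = diagonal (fun i : Fin N => (v i : ℂ)) + superdiag N c + (superdiag N c)ᵀ
      + w • corner N c := by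
  ext i j
  simp only [laxL, superdiag, corner, of_apply, Matrix.add_apply, diagonal_apply, transpose_apply,
    Matrix.smul_apply, smul_eq_mul, Fin.ext_iff]
  split_ifs <;> first | omega | ring

theorem laxA_eq (c : ℕ → ℝ) (w : ℂ) :
    laxA N c w =
      (1 / 2 : ℂ) • (superdiag N c - (superdiag N c)ᵀ) + (w / 2) • corner N c := by
  ext i j
  simp only [laxA, superdiag, corner, of_apply, Matrix.add_apply, Matrix.sub_apply, transpose_apply,
    Matrix.smul_apply, smul_eq_mul]
  split_ifs <;> first | omega | ring

theorem superdiag_mul_transpose_sub (c : ℕ → ℝ) :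
    superdiag N c * (superdiag N c)ᵀ - (superdiag N c)ᵀ * superdiag N c =
      diagonal fun i : Fin N => (todaForce N c i : ℂ) := by
  ext i j
  obtain ⟨i, hi⟩ := i
  obtain ⟨j, hj⟩ := j
  simp only [Matrix.sub_apply, mul_apply, superdiag, transpose_apply, of_apply, diagonal_apply,
    todaForce]
  rw [Fin.sum_univ_eq_sum_range
      (fun k => (if i + 1 = k then (c i : ℂ) else 0) * (if j + 1 = k then (c j : ℂ) else 0)),
    Fin.sum_univ_eq_sum_range
      (fun k => (if k + 1 = i then (c k : ℂ) else 0) * (if k + 1 = j then (c k : ℂ) else 0))]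
  rcases i with _ | i <;> rcases j with _ | j
  all_goals
    simp only [ite_mul, mul_ite, zero_mul, mul_zero, zero_add, Finset.sum_ite_eq,
      Finset.sum_ite_eq', Finset.sum_const_zero, Finset.mem_range, Nat.add_right_cancel_iff,
      Nat.add_eq_zero_iff, Nat.right_eq_add, Nat.add_eq_right, one_ne_zero, and_false,
      ↓reduceIte, ite_self, sub_self, Fin.mk.injEq, add_tsub_cancel_right] <;>
    split_ifs <;> subst_vars <;> first | omega | (push_cast; ring)

theorem corner_mul_transpose_superdiag (c : ℕ → ℝ) : corner N c * (superdiag N c)ᵀ = 0 := by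
  ext i j
  rw [mul_apply, Matrix.zero_apply]
  refine Finset.sum_eq_zero fun k _ => ?_
  simp only [corner, superdiag, transpose_apply, of_apply]
  split_ifs <;> first | omega | simp

theorem transpose_superdiag_mul_corner (c : ℕ → ℝ) : (superdiag N c)ᵀ * corner N c = 0 := by
  ext i j
  rw [mul_apply, Matrix.zero_apply]
  refine Finset.sum_eq_zero fun k _ => ?_
  simp only [corner, superdiag, transpose_apply, of_apply]
  split_ifs <;> first | omega | simp

theorem corner_mul_diagonal_sub (c v : ℕ → ℝ) :
    corner N c * diagonal (fun i : Fin N => (v i : ℂ))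
        - diagonal (fun i : Fin N => (v i : ℂ)) * corner N c =
      ((v 0 - v (N - 1) : ℝ) : ℂ) • corner N c := by
  ext i j
  simp only [Matrix.sub_apply, mul_diagonal, diagonal_mul, corner, of_apply, Matrix.smul_apply,
    smul_eq_mul]
  split_ifs with h
  · rw [h.1, h.2]; push_cast; ring
  · simp

theorem laxA_mul_laxL_sub_apply (c v : ℕ → ℝ) (w : ℂ) (i j : Fin N) :
    (laxA N c w * laxL N c v w - laxL N c v w * laxA N c w) i j =
      (if i = j then (todaForce N c i : ℂ) else 0)
      + (if (i : ℕ) + 1 = j then (c i : ℂ) * (v j - v i) / 2 else 0)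
      + (if (j : ℕ) + 1 = i then (c j : ℂ) * (v i - v j) / 2 else 0)
      + (if (i : ℕ) = N - 1 ∧ (j : ℕ) = 0 then w * ((c (N - 1) : ℂ) * (v 0 - v (N - 1)) / 2)
          else 0) := by
  rw [laxA_eq, laxL_eq, laxPair_commutator_expand, superdiag_mul_transpose_sub,
    corner_mul_diagonal_sub, corner_mul_transpose_superdiag, transpose_superdiag_mul_corner]
  simp only [Matrix.add_apply, Matrix.sub_apply, Matrix.smul_apply, Matrix.zero_apply, mul_diagonal,
    diagonal_mul, diagonal_apply, superdiag, corner, transpose_apply, of_apply, smul_eq_mul]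
  split_ifs <;> first | omega | (push_cast; ring)

theorem laxL_apply (c v : ℕ → ℝ) (w : ℂ) (i j : Fin N) :
    laxL N c v w i j = (if i = j then (v i : ℂ) else 0)
      + (if (i : ℕ) + 1 = j then (c i : ℂ) else 0)
      + (if (j : ℕ) + 1 = i then (c j : ℂ) else 0)
      + (if (i : ℕ) = N - 1 ∧ (j : ℕ) = 0 then w * (c (N - 1) : ℂ) else 0) := by
  simp only [laxL_eq, Matrix.add_apply, Matrix.smul_apply, diagonal_apply, superdiag, corner,
    transpose_apply, of_apply, smul_eq_mul, mul_ite, mul_zero]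

theorem laxEquation_iff (c v : ℝ → ℕ → ℝ)
    (hc : ∀ k, k + 1 < N → ∀ t,
      HasDerivAt (fun s => c s k) (c t k * (v t (k + 1) - v t k) / 2) t)
    (hcN : ∀ t, HasDerivAt (fun s => c s (N - 1)) (c t (N - 1) * (v t 0 - v t (N - 1)) / 2) t) :
    (∀ (w : ℂ) (t : ℝ) (i j : Fin N), HasDerivAt (fun s => laxL N (c s) (v s) w i j)
        ((laxA N (c t) w * laxL N (c t) (v t) w - laxL N (c t) (v t) w * laxA N (c t) w) i j) t) ↔
      ∀ k < N, ∀ t, HasDerivAt (fun s => v s k) (todaForce N (c t) k) t := by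
  simp only [laxA_mul_laxL_sub_apply, laxL_apply]
  constructor
  · intro h k hk t
    simpa [hasDerivAt_ofReal_comp_iff] using h 0 t ⟨k, hk⟩ ⟨k, hk⟩
  · intro hv w t i j
    refine (((hasDerivAt_ite_zero _ ?_).add (hasDerivAt_ite_zero _ ?_)).add
      (hasDerivAt_ite_zero _ ?_)).add (hasDerivAt_ite_zero _ ?_)
    · rintro rfl
      exact (hv i i.isLt t).ofReal_comp
    · intro hij
      rw [← hij]
      exact (hc i (by omega) t).ofReal_comp.congr_deriv (by push_cast; ring)
    · intro hji
      rw [← hji]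
      exact (hc j (by omega) t).ofReal_comp.congr_deriv (by push_cast; ring)
    · intro _
      exact ((hcN t).ofReal_comp.const_mul w).congr_deriv (by push_cast; ring)

section Flaschka

open Real

noncomputable def flaschkaC (N : ℕ) (q : ℕ → ℝ) (k : ℕ) : ℝ :=
  if k = N - 1 then ∏ n ∈ Finset.range (N - 1), (exp ((q n - q (n + 1)) / 2))⁻¹
  else exp ((q k - q (k + 1)) / 2)

theorem flaschkaC_of_ne (q : ℕ → ℝ) {k : ℕ} (hk : k ≠ N - 1) :
    flaschkaC N q k = exp ((q k - q (k + 1)) / 2) :=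
  if_neg hk

theorem flaschkaC_last (q : ℕ → ℝ) : flaschkaC N q (N - 1) = exp ((q (N - 1) - q 0) / 2) := by
  rw [flaschkaC, if_pos rfl, Finset.prod_congr rfl fun n _ => (exp_neg _).symm, ← exp_sum,
    Finset.sum_neg_distrib, ← Finset.sum_div, Finset.sum_range_sub' q]
  ring_nf

theorem neg_todaForce_flaschkaC (q : ℕ → ℝ) {k : ℕ} (hk : k < N) :
    -todaForce N (flaschkaC N q) k =
      (if 0 < k then exp (q (k - 1) - q k) else 0)
        - (if k + 1 < N then exp (q k - q (k + 1)) else 0) := by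
  have hsq : ∀ m, m + 1 < N → flaschkaC N q m ^ 2 = exp (q m - q (m + 1)) := fun m hm => by
    rw [flaschkaC_of_ne q (by omega), ← exp_nat_mul]
    ring_nf
  have hprev : 0 < k → flaschkaC N q (k - 1) ^ 2 = exp (q (k - 1) - q k) := fun h => by
    rw [hsq (k - 1) (by omega), Nat.sub_add_cancel h]
  rw [todaForce, neg_sub]
  congr 1
  · split_ifs with h
    exacts [hprev h, rfl]
  · split_ifs with h
    exacts [hsq k h, rfl]

theorem hasDerivAt_exp_half_sub {q p : ℝ → ℕ → ℝ}
    (hqp : ∀ k t, HasDerivAt (fun s => q s k) (p t k) t) (a b : ℕ) (t : ℝ) :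
    HasDerivAt (fun s => exp ((q s a - q s b) / 2))
      (exp ((q t a - q t b) / 2) * (p t a - p t b) / 2) t :=
  (((hqp a t).sub (hqp b t)).div_const 2).exp.congr_deriv (by simp only [Pi.sub_apply]; ring)

theorem hasDerivAt_flaschkaC {q p : ℝ → ℕ → ℝ}
    (hqp : ∀ k t, HasDerivAt (fun s => q s k) (p t k) t) {k : ℕ} (hk : k + 1 < N) (t : ℝ) :
    HasDerivAt (fun s => flaschkaC N (q s) k)
      (flaschkaC N (q t) k * (p t k - p t (k + 1)) / 2) t := by
  simp only [flaschkaC_of_ne _ (show k ≠ N - 1 by omega)]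
  exact hasDerivAt_exp_half_sub hqp k (k + 1) t

theorem hasDerivAt_flaschkaC_last {q p : ℝ → ℕ → ℝ}
    (hqp : ∀ k t, HasDerivAt (fun s => q s k) (p t k) t) (t : ℝ) :
    HasDerivAt (fun s => flaschkaC N (q s) (N - 1))
      (flaschkaC N (q t) (N - 1) * (p t (N - 1) - p t 0) / 2) t := by
  simp only [flaschkaC_last]
  exact hasDerivAt_exp_half_sub hqp (N - 1) 0 t

theorem open_toda_iff (hN : 2 ≤ N) (q p : ℝ → ℕ → ℝ) :
    ((∀ k, 1 ≤ k → k ≤ N - 2 → ∀ t, HasDerivAt (fun s => p s k)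
        (-exp (q t k - q t (k + 1)) + exp (q t (k - 1) - q t k)) t) ∧
      (∀ t, HasDerivAt (fun s => p s 0) (-exp (q t 0 - q t 1)) t) ∧
      (∀ t, HasDerivAt (fun s => p s (N - 1)) (exp (q t (N - 2) - q t (N - 1))) t)) ↔
    ∀ k < N, ∀ t, HasDerivAt (fun s => p s k)
      ((if 0 < k then exp (q t (k - 1) - q t k) else 0) -
        (if k + 1 < N then exp (q t k - q t (k + 1)) else 0)) t := by
  constructor
  · rintro ⟨hmid, hfirst, hlast⟩ k hk t
    rcases (show k = 0 ∨ k = N - 1 ∨ (1 ≤ k ∧ k ≤ N - 2) by omega)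
      with rfl | rfl | ⟨hk1, hk2⟩
    · simpa [show 1 < N by omega] using hfirst t
    · simpa [show 0 < N - 1 by omega, show N - 1 - 1 = N - 2 by omega, show N - 1 + 1 = N by omega]
        using hlast t
    · simpa [show 0 < k by omega, show k + 1 < N by omega, neg_add_eq_sub] using hmid k hk1 hk2 t
  · intro h
    refine ⟨fun k hk1 hk2 t => ?_, fun t => ?_, fun t => ?_⟩
    · simpa [show 0 < k by omega, show k + 1 < N by omega, neg_add_eq_sub] using h k (by omega) t
    · simpa [show 1 < N by omega] using h 0 (by omega) t
    · simpa [show 0 < N - 1 by omega, show N - 1 - 1 = N - 2 by omega, show N - 1 + 1 = N by omega]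
        using h (N - 1) (by omega) t

end Flaschka

end OpenToda

theorem open_toda_lax_with_spectral_parameter_general (N : ℕ) (hN : 2 ≤ N)
    (q p : ℝ → ℕ → ℝ)
    (hqp : ∀ k t, HasDerivAt (fun s => q s k) (p t k) t) :
    (let c : ℝ → ℕ → ℝ := fun t k =>
      if k = N - 1 then ∏ n ∈ Finset.range (N - 1), (Real.exp ((q t n - q t (n + 1)) / 2))⁻¹
      else Real.exp ((q t k - q t (k + 1)) / 2)
    let v : ℝ → ℕ → ℝ := fun t k => -p t k
    let L : ℂ → ℝ → Matrix (Fin N) (Fin N) ℂ := fun w t =>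
      Matrix.of fun i j =>
        (if (i : ℕ) = (j : ℕ) then (v t i : ℂ) else
          if (i : ℕ) + 1 = (j : ℕ) then (c t i : ℂ) else
          if (j : ℕ) + 1 = (i : ℕ) then (c t j : ℂ) else 0) +
        (if (i : ℕ) = N - 1 ∧ (j : ℕ) = 0 then w * (c t (N - 1) : ℂ) else 0)
    let A : ℂ → ℝ → Matrix (Fin N) (Fin N) ℂ := fun w t =>
      Matrix.of fun i j =>
        (if (i : ℕ) + 1 = (j : ℕ) then (c t i : ℂ) / 2 else
          if (j : ℕ) + 1 = (i : ℕ) then -(c t j : ℂ) / 2 else 0) +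
        (if (i : ℕ) = N - 1 ∧ (j : ℕ) = 0 then (1 / 2 : ℂ) * w * (c t (N - 1) : ℂ) else 0)
    ((∀ k < N, ∀ t, HasDerivAt (fun s => q s k) (p t k) t) ∧
      (∀ k, 1 ≤ k → k ≤ N - 2 → ∀ t, HasDerivAt (fun s => p s k)
        (-Real.exp (q t k - q t (k + 1)) + Real.exp (q t (k - 1) - q t k)) t) ∧
      (∀ t, HasDerivAt (fun s => p s 0) (-Real.exp (q t 0 - q t 1)) t) ∧
      (∀ t, HasDerivAt (fun s => p s (N - 1))
        (Real.exp (q t (N - 2) - q t (N - 1))) t))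
    ↔ (∀ w : ℂ, ∀ t : ℝ, ∀ i j : Fin N, HasDerivAt (fun s => L w s i j)
        ((A w t * L w t - L w t * A w t) i j) t)) := by
  intro c v L A
  have hc : ∀ k, k + 1 < N → ∀ t, HasDerivAt (fun s => OpenToda.flaschkaC N (q s) k)
      (OpenToda.flaschkaC N (q t) k * (-p t (k + 1) - -p t k) / 2) t := fun k hk t =>
    (OpenToda.hasDerivAt_flaschkaC hqp hk t).congr_deriv (by ring)
  have hcN : ∀ t, HasDerivAt (fun s => OpenToda.flaschkaC N (q s) (N - 1))
      (OpenToda.flaschkaC N (q t) (N - 1) * (-p t 0 - -p t (N - 1)) / 2) t := fun t =>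
    (OpenToda.hasDerivAt_flaschkaC_last hqp t).congr_deriv (by ring)
  -- `c t`, `L w t` and `A w t` unfold to `flaschkaC N (q t)`, `laxL N (c t) (v t) w` and
  -- `laxA N (c t) w`.
  refine ((and_iff_right fun k _ t => hqp k t).trans (OpenToda.open_toda_iff hN q p)).trans
    (Iff.trans ?_ (OpenToda.laxEquation_iff c v hc hcN).symm)
  refine forall₂_congr fun k hk => forall_congr' fun t => ?_
  rw [← OpenToda.neg_todaForce_flaschkaC (q t) hk]
  exact hasDerivAt_neg_iff.symm

/-- The open Toda lattice equations are equivalent to the Lax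
equation `∂ₜ L(w) = [A(w), L(w)]` holding for every value of the spectral
parameter `w ∈ ℂ`, where `L(w)`, `A(w)` are the Jacobi matrices augmented by
the entries `w·c_{N-1}` and `(1/2)·w·c_{N-1}` in position `(N-1, 0)`. -/
theorem open_toda_lax_with_spectral_parameter (N : ℕ) (hN : 2 ≤ N)
    (q p : ℝ → ℕ → ℝ)
    (hq : ∀ k, Differentiable ℝ (fun t => q t k))
    (hp : ∀ k, Differentiable ℝ (fun t => p t k))
    (hqp : ∀ k t, HasDerivAt (fun s => q s k) (p t k) t) :
    (let c : ℝ → ℕ → ℝ := fun t k =>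
      if k = N - 1 then ∏ n ∈ Finset.range (N - 1), (Real.exp ((q t n - q t (n + 1)) / 2))⁻¹
      else Real.exp ((q t k - q t (k + 1)) / 2)
    let v : ℝ → ℕ → ℝ := fun t k => -p t k
    let L : ℂ → ℝ → Matrix (Fin N) (Fin N) ℂ := fun w t =>
      Matrix.of fun i j =>
        (if (i : ℕ) = (j : ℕ) then (v t i : ℂ) else
          if (i : ℕ) + 1 = (j : ℕ) then (c t i : ℂ) else
          if (j : ℕ) + 1 = (i : ℕ) then (c t j : ℂ) else 0) +
        (if (i : ℕ) = N - 1 ∧ (j : ℕ) = 0 then w * (c t (N - 1) : ℂ) else 0)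
    let A : ℂ → ℝ → Matrix (Fin N) (Fin N) ℂ := fun w t =>
      Matrix.of fun i j =>
        (if (i : ℕ) + 1 = (j : ℕ) then (c t i : ℂ) / 2 else
          if (j : ℕ) + 1 = (i : ℕ) then -(c t j : ℂ) / 2 else 0) +
        (if (i : ℕ) = N - 1 ∧ (j : ℕ) = 0 then (1 / 2 : ℂ) * w * (c t (N - 1) : ℂ) else 0)
    ((∀ k < N, ∀ t, HasDerivAt (fun s => q s k) (p t k) t) ∧
      (∀ k, 1 ≤ k → k ≤ N - 2 → ∀ t, HasDerivAt (fun s => p s k)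
        (-Real.exp (q t k - q t (k + 1)) + Real.exp (q t (k - 1) - q t k)) t) ∧
      (∀ t, HasDerivAt (fun s => p s 0) (-Real.exp (q t 0 - q t 1)) t) ∧
      (∀ t, HasDerivAt (fun s => p s (N - 1))
        (Real.exp (q t (N - 2) - q t (N - 1))) t))
    ↔ (∀ w : ℂ, ∀ t : ℝ, ∀ i j : Fin N, HasDerivAt (fun s => L w s i j)
        ((A w t * L w t - L w t * A w t) i j) t)) :=
  open_toda_lax_with_spectral_parameter_general N hN q p hqp
end

section
/- Let N ≥ 2 and let E_1,…,E_N, γ_1,…,γ_{N−1} be real numbers satisfying the interlacing condition E_1 < γ_1 < E_2 < ⋯ < E_{N−1} < γ_{N−1} < E_N. Then for every n with 0 ≤ n ≤ N−1, the minors Δ_n(n) and Δ_N(n) of the matrix M(n) are both nonzero; in particular Δ_n(n)·Δ_N(n) ≠ 0. -/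
/-!
If a minor vanished, a kernel vector would split into the coefficients of polynomials `P`, `R`,
not both zero, with `deg P < a`, `deg R < b`, `a + b = N` and `r_i P(E_i) = R(E_i)` at every node.
Interlacing makes the weights `r_i` alternate in sign, so on each of the `N - 1` gaps between
consecutive nodes `P` or `R` has a root, and choosing `(E_i, E_{i+1}]` for `P` and
`[E_i, E_{i+1})` for `R` keeps these roots distinct. That is `N - 1` roots against
`deg P + deg R ≤ N - 2`.
-/

open Polynomial Finset
open scoped Function

namespace Polynomial

theorem exists_isRoot_mem_Icc_of_eval_mul_nonpos (p : ℝ[X]) {a b : ℝ} (hab : a ≤ b)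
    (h : p.eval a * p.eval b ≤ 0) : ∃ z ∈ Set.Icc a b, p.IsRoot z := by
  have hp : ContinuousOn (fun t => p.eval t) (Set.Icc a b) := p.continuousOn
  rcases mul_nonpos_iff.1 h with ⟨ha, hb⟩ | ⟨ha, hb⟩
  · exact intermediate_value_Icc' hab hp ⟨hb, ha⟩
  · exact intermediate_value_Icc hab hp ⟨ha, hb⟩

theorem card_le_natDegree_of_pairwise_disjoint {R ι : Type*} [CommRing R] [IsDomain R]
    {p : R[X]} (hp : p ≠ 0) {I : ι → Set R} (hI : Pairwise (Disjoint on I)) {s : Finset ι}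
    (hroot : ∀ i ∈ s, ∃ z ∈ I i, p.IsRoot z) : #s ≤ p.natDegree := by
  choose z hzI hz using hroot
  have hinj : Function.Injective fun i : s => z i i.2 := fun i j (hij : z i i.2 = z j j.2) =>
    Subtype.ext <| hI.eq <| Set.not_disjoint_iff.2 ⟨_, hzI i i.2, hij ▸ hzI j j.2⟩
  by_contra! hlt
  exact hp <| eq_zero_of_natDegree_lt_card_of_eval_eq_zero p hinj (fun i => hz _ _)
    (by simpa using hlt)

theorem coeff_sum_fin_C_mul_X_pow {R : Type*} [Semiring R] {n : ℕ} (f : Fin n → R) (j : Fin n) :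
    (∑ i : Fin n, C (f i) * X ^ (i : ℕ)).coeff j = f j := by
  simp [finsetSum_coeff, coeff_C_mul, coeff_X_pow, Fin.val_inj]

end Polynomial

section Alternating

variable {m : ℕ} {x w : Fin (m + 1) → ℝ} {P R : ℝ[X]}

theorem pairwise_disjoint_Ioc_castSucc_succ (hx : Monotone x) :
    Pairwise (Disjoint on fun i : Fin m => Set.Ioc (x i.castSucc) (x i.succ)) :=
  fun i j hij => by
    simpa [Fin.orderSucc_castSucc] using
      hx.pairwise_disjoint_on_Ioc_succ ((Fin.castSucc_injective m).ne hij)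

theorem pairwise_disjoint_Ico_castSucc_succ (hx : Monotone x) :
    Pairwise (Disjoint on fun i : Fin m => Set.Ico (x i.castSucc) (x i.succ)) :=
  fun i j hij => by
    simpa [Fin.orderSucc_castSucc] using
      hx.pairwise_disjoint_on_Ico_succ ((Fin.castSucc_injective m).ne hij)

theorem exists_isRoot_mem_Ioc_or_Ico (hx : StrictMono x) (hw : ∀ i, w i ≠ 0)
    (halt : ∀ i : Fin m, w i.castSucc * w i.succ < 0)
    (h : ∀ i, w i * P.eval (x i) = R.eval (x i)) (i : Fin m) :
    (∃ z ∈ Set.Ioc (x i.castSucc) (x i.succ), P.IsRoot z) ∨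
      ∃ z ∈ Set.Ico (x i.castSucc) (x i.succ), R.IsRoot z := by
  have hlt : x i.castSucc < x i.succ := hx i.castSucc_lt_succ
  by_cases hp : P.eval (x i.castSucc) = 0
  · refine .inr ⟨_, ⟨le_rfl, hlt⟩, ?_⟩
    rw [IsRoot, ← h, hp, mul_zero]
  by_cases hpq : P.eval (x i.castSucc) * P.eval (x i.succ) ≤ 0
  · obtain ⟨z, hz, hPz⟩ := P.exists_isRoot_mem_Icc_of_eval_mul_nonpos hlt.le hpq
    refine .inl ⟨z, ⟨lt_of_le_of_ne hz.1 ?_, hz.2⟩, hPz⟩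
    rintro rfl
    exact hp hPz
  · have hq : P.eval (x i.succ) ≠ 0 := by
      rintro hq
      simp [hq] at hpq
    have hRR : R.eval (x i.castSucc) * R.eval (x i.succ) ≤ 0 := by
      rw [← h, ← h, mul_mul_mul_comm]
      exact mul_nonpos_of_nonpos_of_nonneg (halt i).le (not_le.1 hpq).le
    obtain ⟨z, hz, hRz⟩ := R.exists_isRoot_mem_Icc_of_eval_mul_nonpos hlt.le hRR
    refine .inr ⟨z, ⟨hz.1, lt_of_le_of_ne hz.2 ?_⟩, hRz⟩
    rintro rfl
    exact mul_ne_zero (hw _) hq ((h _).trans hRz)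

theorem eq_zero_and_eq_zero_of_alternating_weights {a b : ℕ} (hab : a + b = m + 1)
    (hx : StrictMono x) (hw : ∀ i, w i ≠ 0) (halt : ∀ i : Fin m, w i.castSucc * w i.succ < 0)
    (hP : P.degree < a) (hR : R.degree < b) (h : ∀ i, w i * P.eval (x i) = R.eval (x i)) :
    P = 0 ∧ R = 0 := by
  classical
  have vanish (Q : ℝ[X]) (k : ℕ) (hk : k ≤ m + 1) (hQ : Q.degree < k)
      (hQx : ∀ i, Q.eval (x i) = 0) : Q = 0 :=
    eq_zero_of_degree_lt_of_eval_index_eq_zero univ hx.injective.injOn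
      (hQ.trans_le (by simpa using mod_cast hk)) fun i _ => hQx i
  have hPR : P = 0 → R = 0 := fun hP0 =>
    vanish R b (by omega) hR fun i => by rw [← h, hP0, eval_zero, mul_zero]
  have hRP : R = 0 → P = 0 := fun hR0 =>
    vanish P a (by omega) hP fun i => by simpa [hR0, hw i] using h i
  by_contra hne
  have hP0 : P ≠ 0 := fun hP0 => hne ⟨hP0, hPR hP0⟩
  have hR0 : R ≠ 0 := fun hR0 => hne ⟨hRP hR0, hR0⟩
  have hPa := (natDegree_lt_iff_degree_lt hP0).2 hP
  have hRb := (natDegree_lt_iff_degree_lt hR0).2 hR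
  let S := univ.filter fun i : Fin m => ∃ z ∈ Set.Ioc (x i.castSucc) (x i.succ), P.IsRoot z
  have hS : #S ≤ P.natDegree := card_le_natDegree_of_pairwise_disjoint hP0
    (pairwise_disjoint_Ioc_castSucc_succ hx.monotone) fun i hi => (mem_filter.1 hi).2
  have hSc : #Sᶜ ≤ R.natDegree := card_le_natDegree_of_pairwise_disjoint hR0
    (pairwise_disjoint_Ico_castSucc_succ hx.monotone) fun i hi =>
      (exists_isRoot_mem_Ioc_or_Ico hx hw halt h i).resolve_left (by simpa [S] using hi)
  have := card_add_card_compl S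
  simp only [Fintype.card_fin] at this
  omega

end Alternating

section InterpolationMatrix

variable {K : Type*}

def interpolationMatrix [Ring K] {m k : ℕ} (w x : Fin m → K) (a : ℕ) :
    Matrix (Fin m) (Fin k) K :=
  Matrix.of fun i j => if (j : ℕ) < a then w i * x i ^ (j : ℕ) else -x i ^ ((j : ℕ) - a)

theorem interpolationMatrix_submatrix_castSucc [Ring K] {m k : ℕ} (w x : Fin m → K) (a : ℕ) :
    (interpolationMatrix w x a : Matrix (Fin m) (Fin (k + 1)) K).submatrix id Fin.castSucc =
      interpolationMatrix w x a := by
  ext i j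
  simp [interpolationMatrix]

theorem interpolationMatrix_submatrix_succAbove [Ring K] {m k : ℕ} (w x : Fin m → K) {a : ℕ}
    (ha : a < k + 1) :
    (interpolationMatrix w x (a + 1) : Matrix (Fin m) (Fin (k + 1)) K).submatrix id
      (Fin.succAbove ⟨a, ha⟩) = interpolationMatrix w x a := by
  ext i j
  rcases lt_or_ge (j : ℕ) a with hj | hj
  · rw [Matrix.submatrix_apply, Fin.succAbove_of_castSucc_lt _ _ hj]
    simp [interpolationMatrix, hj, hj.not_gt]
  · rw [Matrix.submatrix_apply, Fin.succAbove_of_le_castSucc _ _ hj]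
    simp [interpolationMatrix, hj.not_gt]

theorem det_interpolationMatrix_ne_zero [Field K] {m a b : ℕ} (hab : a + b = m)
    (w x : Fin m → K) (h : ∀ P R : K[X], P.degree < a → R.degree < b →
      (∀ i, w i * P.eval (x i) = R.eval (x i)) → P = 0 ∧ R = 0) :
    (interpolationMatrix w x a : Matrix (Fin m) (Fin m) K).det ≠ 0 := by
  subst hab
  intro hdet
  obtain ⟨v, hv, hAv⟩ := Matrix.exists_mulVec_eq_zero_iff.2 hdet
  let P : K[X] := ∑ j : Fin a, C (v (Fin.castAdd b j)) * X ^ (j : ℕ)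
  let R : K[X] := ∑ j : Fin b, C (v (Fin.natAdd a j)) * X ^ (j : ℕ)
  have hPR : ∀ i, w i * P.eval (x i) = R.eval (x i) := by
    intro i
    have := congrFun hAv i
    simp [Matrix.mulVec, dotProduct, Fin.sum_univ_add, interpolationMatrix] at this
    simp only [P, R, eval_finsetSum, eval_mul, eval_C, eval_pow, eval_X, mul_sum]
    rw [add_neg_eq_zero] at this
    convert this using 2 <;> ring
  obtain ⟨hP, hR⟩ := h P R (degree_sum_fin_lt _) (degree_sum_fin_lt _) hPR
  refine hv (funext fun j => Fin.addCases (fun j => ?_) (fun j => ?_) j)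
  · simpa using (coeff_sum_fin_C_mul_X_pow _ j).symm.trans (congrArg (coeff · j) hP)
  · simpa using (coeff_sum_fin_C_mul_X_pow _ j).symm.trans (congrArg (coeff · j) hR)

end InterpolationMatrix

def Interlacing (N : ℕ) (E γ : ℕ → ℝ) : Prop :=
  ∀ k, 1 ≤ k → k ≤ N - 1 → E k < γ k ∧ γ k < E (k + 1)

namespace Interlacing

variable {N i s : ℕ} {E γ : ℕ → ℝ}

theorem strictMonoOn (h : Interlacing N E γ) : StrictMonoOn E (Set.Icc 1 N) :=
  strictMonoOn_of_lt_succ Set.ordConnected_Icc fun k _ hk hk1 => by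
    simp only [Set.mem_Icc, Order.succ_eq_add_one] at hk hk1 ⊢
    exact (h k hk.1 (by omega)).1.trans (h k hk.1 (by omega)).2

theorem gamma_lt (h : Interlacing N E γ) (hs : 1 ≤ s) (hsi : s < i) (hi : i ≤ N) :
    γ s < E i :=
  (h s hs (by omega)).2.trans_le <|
    h.strictMonoOn.monotoneOn ⟨by omega, by omega⟩ ⟨by omega, hi⟩ hsi

theorem lt_gamma (h : Interlacing N E γ) (hi : 1 ≤ i) (his : i ≤ s) (hs : s ≤ N - 1) :
    E i < γ s :=
  (h.strictMonoOn.monotoneOn ⟨hi, by omega⟩ ⟨by omega, by omega⟩ his).trans_lt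
    (h s (by omega) hs).1

theorem prod_sub_ne_zero (h : Interlacing N E γ) (hi : 1 ≤ i) (hiN : i ≤ N) :
    ∏ s ∈ Icc 1 (N - 1), (E i - γ s) ≠ 0 :=
  prod_ne_zero_iff.2 fun s hs => by
    rw [mem_Icc] at hs
    rcases lt_or_ge s i with hsi | his
    · exact sub_ne_zero.2 (h.gamma_lt hs.1 hsi hiN).ne'
    · exact sub_ne_zero.2 (h.lt_gamma hi his hs.2).ne

theorem prod_sub_mul_prod_sub_neg (h : Interlacing N E γ) (hi : 1 ≤ i) (hiN : i + 1 ≤ N) :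
    (∏ s ∈ Icc 1 (N - 1), (E i - γ s)) * ∏ s ∈ Icc 1 (N - 1), (E (i + 1) - γ s) < 0 := by
  have hmem : i ∈ Icc 1 (N - 1) := mem_Icc.2 ⟨hi, by omega⟩
  rw [← prod_mul_distrib, ← mul_prod_erase _ _ hmem]
  refine mul_neg_of_neg_of_pos (mul_neg_of_neg_of_pos (sub_neg.2 (h i hi (by omega)).1)
    (sub_pos.2 (h i hi (by omega)).2)) (prod_pos fun s hs => ?_)
  obtain ⟨hsi, hs⟩ := mem_erase.1 hs
  rw [mem_Icc] at hs
  rcases lt_or_gt_of_ne hsi with hsi | hsi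
  · exact mul_pos (sub_pos.2 (h.gamma_lt hs.1 hsi (by omega)))
      (sub_pos.2 (h.gamma_lt hs.1 (by omega) hiN))
  · exact mul_pos_of_neg_of_neg (sub_neg.2 (h.lt_gamma hi hsi.le hs.2))
      (sub_neg.2 (h.lt_gamma (by omega) hsi hs.2))

end Interlacing

/-- For interlacing spectral data `E₁ < γ₁ < E₂ < ⋯ < γ_{N−1} < E_N`,
the minors `Δₙ(n)` and `Δ_N(n)` of the matrix `M(n)` are nonzero, hence
`Δₙ(n)·Δ_N(n) ≠ 0`. -/
theorem interlacing_minors_nonzero (N : ℕ) (hN : 2 ≤ N)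
    (E γ : ℕ → ℝ)
    (hint : ∀ k, 1 ≤ k → k ≤ N - 1 → E k < γ k ∧ γ k < E (k + 1)) :
    (let r : ℕ → ℝ := fun i => ∏ s ∈ Finset.Icc 1 (N - 1), (E i - γ s)
    -- the N×(N+1) matrix M(n); rows i = 1,…,N, columns j = 0,…,N
    let M : ℕ → Matrix (Fin N) (Fin (N + 1)) ℝ := fun n =>
      Matrix.of fun i j =>
        if (j : ℕ) ≤ n then r ((i : ℕ) + 1) * (E ((i : ℕ) + 1)) ^ (j : ℕ)
        else -(E ((i : ℕ) + 1)) ^ ((j : ℕ) - n - 1)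
    -- Δ_j(n): determinant of M(n) with column j deleted
    let Δ : Fin (N + 1) → ℕ → ℝ := fun j n =>
      Matrix.det ((M n).submatrix id j.succAbove)
    ∀ n : ℕ, ∀ _ : n ≤ N - 1,
      Δ ⟨n, by omega⟩ n ≠ 0 ∧ Δ ⟨N, by omega⟩ n ≠ 0 ∧
      Δ ⟨n, by omega⟩ n * Δ ⟨N, by omega⟩ n ≠ 0) := by
  intro r M Δ n hn
  obtain ⟨m, rfl⟩ : ∃ m, N = m + 1 := ⟨N - 1, by omega⟩
  have hEγ : Interlacing (m + 1) E γ := hint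
  let w : Fin (m + 1) → ℝ := fun i => r (i + 1)
  let x : Fin (m + 1) → ℝ := fun i => E (i + 1)
  have hx : StrictMono x := fun i j hij =>
    hEγ.strictMonoOn ⟨by omega, by omega⟩ ⟨by omega, by omega⟩ (by simpa using hij)
  have hw (i : Fin (m + 1)) : w i ≠ 0 := hEγ.prod_sub_ne_zero (by omega) (by omega)
  have halt (i : Fin m) : w i.castSucc * w i.succ < 0 :=
    hEγ.prod_sub_mul_prod_sub_neg (i := i + 1) (by omega) (by omega)
  have hdet (a : ℕ) (ha : a ≤ m + 1) :
      (interpolationMatrix w x a : Matrix (Fin (m + 1)) (Fin (m + 1)) ℝ).det ≠ 0 :=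
    det_interpolationMatrix_ne_zero (Nat.add_sub_cancel' ha) w x fun _ _ hP hR =>
      eq_zero_and_eq_zero_of_alternating_weights (Nat.add_sub_cancel' ha) hx hw halt hP hR
  have hM : M n = interpolationMatrix w x (n + 1) := by
    ext i j
    simp [M, w, x, interpolationMatrix, Nat.sub_sub]
  have h₁ : Δ ⟨n, by omega⟩ n ≠ 0 := by
    simpa [Δ, hM, interpolationMatrix_submatrix_succAbove] using hdet n (by omega)
  have h₂ : Δ ⟨m + 1, by omega⟩ n ≠ 0 := by
    have hlast : (⟨m + 1, by omega⟩ : Fin (m + 2)) = Fin.last (m + 1) := rfl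
    simpa [Δ, hM, hlast, interpolationMatrix_submatrix_castSucc] using hdet (n + 1) (by omega)
  exact ⟨h₁, h₂, mul_ne_zero h₁ h₂⟩
end

section
/- Let N ≥ 2, let v_0,…,v_{N−1} be real and c_0,…,c_{N−2} > 0, and let P(E) = det(E·I − L_0) be the characteristic polynomial of the Jacobi matrix L_0. Let ψ_n(E) be the polynomials determined by ψ_0 = 1 and the forward recurrence c_0ψ_1 = (E−v_0)ψ_0, c_nψ_{n+1} = (E−v_n)ψ_n − c_{n−1}ψ_{n−1} (1 ≤ n ≤ N−2), and let φ_n(E) be determined by φ_{N−1} = 1 and the backward recurrence c_{N−2}φ_{N−2} = (E−v_{N−1})φ_{N−1}, c_{n−1}φ_{n−1} = (E−v_n)φ_n − c_nφ_{n+1} (1 ≤ n ≤ N−2). Then for all E: Σ_{n=0}^{N−1} ψ_n(E) φ_n(E) = P′(E) / (c_0 c_1 ⋯ c_{N−2}), where P′ denotes the derivative of P. -/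
/-!
Let `D_n(x)` be the `n`-th leading principal minor of `x - L₀`. Expanding along the last row,
`D_n` satisfies the recurrence of `ψ`, so `D_n = c₀⋯c_{n-1} ψ_n` and `P = c₀⋯c_{N-2} W` with
`W(x) = (x - v_{N-1}) ψ_{N-1}(x) - c_{N-2} ψ_{N-2}(x)`. Summing the discrete Wronskian identities
of the two recurrences gives the Christoffel–Darboux formula
`(x - E) Σ ψ_n(x) φ_n(E) = W(x) - W(E)`, so `Σ ψ_n(E) φ_n(E) = W'(E)`.
-/

open Finset Matrix

def tridiag {R : Type*} [Zero R] (d e : ℕ → R) (n : ℕ) : Matrix (Fin n) (Fin n) R :=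
  of fun i j => if (i : ℕ) = j then d i else if (i : ℕ) + 1 = j then e i else
    if (j : ℕ) + 1 = i then e j else 0

namespace tridiag
variable {R : Type*} [CommRing R] (d e : ℕ → R)

theorem apply_self {n : ℕ} (i : Fin n) : tridiag d e n i i = d i := by
  simp [tridiag]

theorem apply_of_succ_eq {n : ℕ} {i j : Fin n} (h : (i : ℕ) + 1 = j) :
    tridiag d e n i j = e i := by
  simp only [tridiag, of_apply]
  rw [if_neg (by omega), if_pos h]

theorem apply_of_eq_succ {n : ℕ} {i j : Fin n} (h : (i : ℕ) = j + 1) :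
    tridiag d e n i j = e j := by
  simp only [tridiag, of_apply]
  rw [if_neg (by omega), if_neg (by omega), if_pos h.symm]

theorem apply_of_far {n : ℕ} {i j : Fin n} (h : (j : ℕ) + 2 ≤ i ∨ (i : ℕ) + 2 ≤ j) :
    tridiag d e n i j = 0 := by
  simp only [tridiag, of_apply]
  rw [if_neg (by omega), if_neg (by omega), if_neg (by omega)]

theorem submatrix_eq {m n : ℕ} (f g : Fin m → Fin n) (hf : ∀ i, (f i : ℕ) = i)
    (hg : ∀ j, (g j : ℕ) = j) : (tridiag d e n).submatrix f g = tridiag d e m := by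
  ext i j; simp [tridiag, hf, hg]

theorem det_submatrix_succAbove_last_castSucc_last (n : ℕ) :
    ((tridiag d e (n + 2)).submatrix (Fin.last _).succAbove (Fin.last n).castSucc.succAbove).det
      = e n * (tridiag d e n).det := by
  rw [det_succ_column _ (Fin.last n), Fin.sum_univ_castSucc,
    sum_eq_zero fun i _ => ?_, zero_add]
  · simp only [Fin.succAbove_last, submatrix_apply, submatrix_submatrix,
      Fin.succAbove_castSucc_self, Fin.succ_last, Fin.val_last]
    rw [submatrix_eq d e (Fin.castSucc ∘ Fin.castSucc) _ (fun _ => rfl)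
      (fun j => by simp [Fin.succAbove_castSucc_of_lt _ _ (Fin.castSucc_lt_last j)]),
      apply_of_succ_eq d e (by simp), ← two_mul, pow_mul]
    simp
  · rw [submatrix_apply, apply_of_far, mul_zero, zero_mul]
    simp [Fin.succAbove_last]

theorem det_succ_succ (n : ℕ) :
    (tridiag d e (n + 2)).det
      = d (n + 1) * (tridiag d e (n + 1)).det - e n * e n * (tridiag d e n).det := by
  rw [det_succ_row _ (Fin.last _), Fin.sum_univ_castSucc, Fin.sum_univ_castSucc,
    sum_eq_zero fun j _ => ?_, zero_add, det_submatrix_succAbove_last_castSucc_last,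
    Fin.succAbove_last, submatrix_eq d e Fin.castSucc Fin.castSucc (fun _ => rfl) (fun _ => rfl),
    apply_self, apply_of_eq_succ d e (by simp)]
  · simp [← two_mul, pow_mul]
    ring
  · rw [apply_of_far, mul_zero, zero_mul]
    simp

theorem smul_one_sub (x : R) (n : ℕ) :
    x • (1 : Matrix (Fin n) (Fin n) R) - tridiag d e n
      = tridiag (fun i => x - d i) (fun i => -e i) n := by
  ext i j
  rcases eq_or_ne i j with rfl | hij
  · simp [apply_self]
  · simp only [Matrix.sub_apply, Matrix.smul_apply, one_apply_ne hij, smul_zero, zero_sub, tridiag,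
      of_apply, if_neg (Fin.val_ne_of_ne hij)]
    split_ifs <;> simp

end tridiag

section JacobiRecurrence

variable {R : Type*} [CommRing R] (v c p : ℕ → R) (x : R) (m : ℕ)

theorem prod_mul_eq_det_smul_one_sub_tridiag (h0 : p 0 = 1) (h1 : c 0 * p 1 = (x - v 0) * p 0)
    (h : ∀ n < m, c (n + 1) * p (n + 2) = (x - v (n + 1)) * p (n + 1) - c n * p n) :
    ∀ n ≤ m + 1, (∏ k ∈ range n, c k) * p n = (x • 1 - tridiag v c n).det := by
  intro n
  induction n using Nat.twoStepInduction with
  | zero => simp [h0]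
  | one => simp [h0, h1, tridiag.smul_one_sub, tridiag.apply_self]
  | more n ih₀ ih₁ =>
    intro hn
    rw [tridiag.smul_one_sub] at ih₀ ih₁ ⊢
    rw [tridiag.det_succ_succ, ← ih₀ (by omega), ← ih₁ (by omega), prod_range_succ,
      prod_range_succ]
    linear_combination (∏ k ∈ range n, c k) * c n * h n (by omega)

theorem det_smul_one_sub_tridiag (h0 : p 0 = 1) (h1 : c 0 * p 1 = (x - v 0) * p 0)
    (h : ∀ n < m, c (n + 1) * p (n + 2) = (x - v (n + 1)) * p (n + 1) - c n * p n) :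
    (x • 1 - tridiag v c (m + 2)).det
      = (∏ k ∈ range (m + 1), c k) * ((x - v (m + 1)) * p (m + 1) - c m * p m) := by
  have hdet := prod_mul_eq_det_smul_one_sub_tridiag v c p x m h0 h1 h
  simp only [tridiag.smul_one_sub] at hdet ⊢
  rw [tridiag.det_succ_succ, ← hdet _ le_rfl, ← hdet _ (by omega), prod_range_succ]
  ring

end JacobiRecurrence

theorem continuous_of_jacobi_recurrence (v c : ℕ → ℝ) (ψ : ℕ → ℝ → ℝ) (m : ℕ)
    (hc : ∀ n ≤ m, c n ≠ 0) (h0 : ∀ x, ψ 0 x = 1) (h1 : ∀ x, c 0 * ψ 1 x = (x - v 0) * ψ 0 x)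
    (h : ∀ x, ∀ n < m, c (n + 1) * ψ (n + 2) x = (x - v (n + 1)) * ψ (n + 1) x - c n * ψ n x)
    (n : ℕ) (hn : n ≤ m + 1) : Continuous (ψ n) := by
  have hprod : ∏ k ∈ range n, c k ≠ 0 :=
    prod_ne_zero_iff.2 fun k hk => hc k (by rw [mem_range] at hk; omega)
  have hψ : ψ n = fun x => (∏ k ∈ range n, c k)⁻¹ * (x • 1 - tridiag v c n).det :=
    funext fun x => (eq_inv_mul_iff_mul_eq₀ hprod).2 <|
      prod_mul_eq_det_smul_one_sub_tridiag v c (ψ · x) x m (h0 x) (h1 x) (h x) n hn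
  rw [hψ]
  fun_prop

theorem christoffel_darboux {R : Type*} [CommRing R] (v c p q : ℕ → R) (x y : R) (m : ℕ)
    (hp1 : c 0 * p 1 = (x - v 0) * p 0)
    (hp : ∀ n < m, c (n + 1) * p (n + 2) = (x - v (n + 1)) * p (n + 1) - c n * p n)
    (hq1 : c m * q m = (y - v (m + 1)) * q (m + 1))
    (hq : ∀ n < m, c n * q n = (y - v (n + 1)) * q (n + 1) - c (n + 1) * q (n + 2)) :
    (x - y) * ∑ n ∈ range (m + 2), p n * q n
      = ((x - v (m + 1)) * p (m + 1) - c m * p m) * q (m + 1)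
        - p 0 * ((y - v 0) * q 0 - c 0 * q 1) := by
  have partial_sum : ∀ k ≤ m, (x - y) * ∑ n ∈ range (k + 1), p n * q n
      = c k * (p (k + 1) * q k - p k * q (k + 1)) - p 0 * ((y - v 0) * q 0 - c 0 * q 1) := by
    intro k
    induction k with
    | zero => intro; rw [zero_add, sum_range_one]; linear_combination -q 0 * hp1
    | succ k ih =>
      intro hk
      rw [sum_range_succ, mul_add, ih (by omega)]
      linear_combination p (k + 1) * hq k (by omega) - q (k + 1) * hp k (by omega)
  rw [sum_range_succ, mul_add, partial_sum m le_rfl]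
  linear_combination p (m + 1) * hq1

theorem hasDerivAt_of_sub_eq_sub_mul {𝕜 : Type*} [NontriviallyNormedField 𝕜] {f g : 𝕜 → 𝕜}
    {a : 𝕜} (hg : ContinuousAt g a) (h : ∀ x, f x - f a = (x - a) * g x) :
    HasDerivAt f (g a) a := by
  rw [hasDerivAt_iff_tendsto_slope]
  refine (hg.tendsto.mono_left nhdsWithin_le_nhds).congr' ?_
  filter_upwards [self_mem_nhdsWithin] with x hx
  rw [slope_def_field, h, mul_div_cancel_left₀ _ (sub_ne_zero.2 hx)]

/-- For the forward and backward eigenpolynomials `ψₙ`, `φₙ` of a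
Jacobi matrix `L₀` one has `Σₙ ψₙ(E)φₙ(E) = P′(E)/(c₀⋯c_{N−2})`, where `P` is
the characteristic polynomial of `L₀`. -/
theorem jacobi_eigenfunction_pairing (N : ℕ) (hN : 2 ≤ N)
    (v c : ℕ → ℝ) (hc : ∀ n ≤ N - 2, 0 < c n)
    (ψ φ : ℕ → ℝ → ℝ)
    (hψ0 : ∀ E, ψ 0 E = 1)
    (hψ1 : ∀ E, c 0 * ψ 1 E = (E - v 0) * ψ 0 E)
    (hψ : ∀ n, 1 ≤ n → n ≤ N - 2 → ∀ E,
      c n * ψ (n + 1) E = (E - v n) * ψ n E - c (n - 1) * ψ (n - 1) E)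
    (hφ0 : ∀ E, φ (N - 1) E = 1)
    (hφ1 : ∀ E, c (N - 2) * φ (N - 2) E = (E - v (N - 1)) * φ (N - 1) E)
    (hφ : ∀ n, 1 ≤ n → n ≤ N - 2 → ∀ E,
      c (n - 1) * φ (n - 1) E = (E - v n) * φ n E - c n * φ (n + 1) E) :
    (let L₀ : Matrix (Fin N) (Fin N) ℝ :=
      Matrix.of fun i j =>
        if (i : ℕ) = (j : ℕ) then v i else
          if (i : ℕ) + 1 = (j : ℕ) then c i else
          if (j : ℕ) + 1 = (i : ℕ) then c j else 0
    let P : ℝ → ℝ := fun x =>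
      Matrix.det (x • (1 : Matrix (Fin N) (Fin N) ℝ) - L₀)
    ∀ E : ℝ, ∑ n ∈ Finset.range N, ψ n E * φ n E
      = deriv P E / ∏ k ∈ Finset.range (N - 1), c k) := by
  intro L₀ P E
  obtain ⟨m, rfl⟩ : ∃ m, N = m + 2 := ⟨N - 2, by omega⟩
  simp only [Nat.add_sub_cancel, Nat.reduceSubDiff] at hc hψ hφ0 hφ1 hφ ⊢
  have hc' : ∀ n ≤ m, c n ≠ 0 := fun n hn => (hc n hn).ne'
  have hψ' : ∀ x, ∀ n < m,
      c (n + 1) * ψ (n + 2) x = (x - v (n + 1)) * ψ (n + 1) x - c n * ψ n x :=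
    fun x n hn => by simpa using hψ (n + 1) (by omega) (by omega) x
  have hφ' : ∀ n < m, c n * φ n E = (E - v (n + 1)) * φ (n + 1) E - c (n + 1) * φ (n + 2) E :=
    fun n hn => by simpa using hφ (n + 1) (by omega) (by omega) E
  set C := ∏ k ∈ range (m + 1), c k
  have hC : C ≠ 0 := prod_ne_zero_iff.2 fun k hk => hc' k (by rw [mem_range] at hk; omega)
  set G : ℝ → ℝ := fun x => ∑ n ∈ range (m + 2), ψ n x * φ n E
  set W : ℝ → ℝ := fun x => (x - v (m + 1)) * ψ (m + 1) x - c m * ψ m x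
  -- `L₀` is `tridiag v c (m + 2)` by definition.
  have hP : ∀ x, P x = C * W x := fun x =>
    det_smul_one_sub_tridiag v c (ψ · x) x m (hψ0 x) (hψ1 x) (hψ' x)
  have hCD : ∀ x, (x - E) * G x = W x - W E := by
    have h := fun x =>
      christoffel_darboux v c (ψ · x) (φ · E) x E m (hψ1 x) (hψ' x) (hφ1 E) hφ'
    simp only [hψ0, hφ0, one_mul, mul_one] at h
    exact fun x => by linear_combination h x - h E
  have hG : Continuous G := continuous_finsetSum _ fun n hn =>
    (continuous_of_jacobi_recurrence v c ψ m hc' hψ0 hψ1 hψ' n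
      (by rw [mem_range] at hn; omega)).mul continuous_const
  have hderiv : HasDerivAt P (C * G E) E :=
    hasDerivAt_of_sub_eq_sub_mul (g := fun x => C * G x) (continuous_const.mul hG).continuousAt
      fun x => by rw [hP, hP]; linear_combination -C * hCD x
  rw [hderiv.deriv, mul_div_cancel_left₀ _ hC]
end

section
/- Let N ≥ 2, let v_0,…,v_{N−1} be real and c_0,…,c_{N−2} > 0, let ψ_n(E) and φ_n(E) be as in the forward and backward recurrences, let γ_1,…,γ_{N−1} be the eigenvalues of the truncated matrix L_1 (L_0 with first row and column deleted), and define χ_1(n) for 1 ≤ n ≤ N−1 as the ratio of the coefficient of E^{n−1} to the coefficient of E^n in ψ_n(E), and χ_1^σ(n) for 0 ≤ n ≤ N−2 as the ratio of the coefficient of E^{N−2−n} to the coefficient of E^{N−1−n} in φ_n(E), plus Σ_{s=1}^{N−1} γ_s. Then χ_1(n+1) + χ_1^σ(n) = −v_0 for every n with 0 ≤ n ≤ N−2. -/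
/-!
Rescaling `ψₙ` by `c₀ ⋯ cₙ₋₁` turns the Jacobi recurrence into the monic recurrence
`Pₙ₊₁ = (X - vₙ) Pₙ - cₙ₋₁² Pₙ₋₁`; the last term lies two degrees lower, so the subleading
coefficient of `Pₙ` is `-(v₀ + ⋯ + vₙ₋₁)`. Hence `χ₁(n+1) = -(v₀ + ⋯ + vₙ)`, and the same argument
for `φ`, read from the right end, gives `-(vₙ₊₁ + ⋯ + v_{N-1})` for the coefficient ratio of `φₙ`.
The `N - 1` distinct eigenvalues `γₛ` are all the roots of the characteristic polynomial of `L₁`,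
so their sum is its trace `v₁ + ⋯ + v_{N-1}`, and everything cancels except `-v₀`.
-/

open Polynomial Finset

namespace Polynomial

variable {R : Type*} [Ring R]

theorem nextCoeff_sub_of_natDegree_add_one_lt {p q : R[X]} (h : q.natDegree + 1 < p.natDegree) :
    (p - q).nextCoeff = p.nextCoeff := by
  have hdeg : (p - q).natDegree = p.natDegree := natDegree_sub_eq_left_of_natDegree_lt (by omega)
  rw [nextCoeff_of_natDegree_pos (by omega), nextCoeff_of_natDegree_pos (by omega), hdeg,
    coeff_sub, coeff_eq_zero_of_natDegree_lt (p := q) (by omega), sub_zero]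

end Polynomial

structure IsMonicRecurrence {R : Type*} [CommRing R] (M : ℕ) (v b : ℕ → R) (P : ℕ → R[X]) :
    Prop where
  zero : P 0 = 1
  one : P 1 = X - C (v 0)
  succ : ∀ n, 1 ≤ n → n ≤ M → P (n + 1) = (X - C (v n)) * P n - C (b n) * P (n - 1)

structure IsJacobiRecurrence {R : Type*} [CommRing R] (M : ℕ) (v c : ℕ → R) (ψ : ℕ → R[X]) :
    Prop where
  zero : ψ 0 = 1
  one : C (c 0) * ψ 1 = (X - C (v 0)) * ψ 0
  succ : ∀ n, 1 ≤ n → n ≤ M →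
    C (c n) * ψ (n + 1) = (X - C (v n)) * ψ n - C (c (n - 1)) * ψ (n - 1)

namespace IsMonicRecurrence

variable {R : Type*} [CommRing R] [Nontrivial R] {M : ℕ} {v b : ℕ → R} {P : ℕ → R[X]}

theorem monic_natDegree_nextCoeff (hP : IsMonicRecurrence M v b P) {n : ℕ} (hn : n ≤ M + 1) :
    (P n).Monic ∧ (P n).natDegree = n ∧ (P n).nextCoeff = -∑ k ∈ range n, v k := by
  induction n using Nat.strong_induction_on with
  | _ n ih =>
  match n with
  | 0 => simpa [hP.zero] using nextCoeff_C_eq_zero (1 : R)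
  | 1 => simp [hP.one, monic_X_sub_C, nextCoeff_X_sub_C]
  | n + 2 =>
    obtain ⟨hmon₁, hdeg₁, hnext₁⟩ := ih (n + 1) (by omega) (by omega)
    obtain ⟨-, hdeg₀, -⟩ := ih n (by omega) (by omega)
    have hmon : ((X - C (v (n + 1))) * P (n + 1)).Monic := (monic_X_sub_C _).mul hmon₁
    have hdeg : ((X - C (v (n + 1))) * P (n + 1)).natDegree = n + 2 := by
      rw [(monic_X_sub_C _).natDegree_mul hmon₁, natDegree_X_sub_C, hdeg₁]; ring
    have hlow : (C (b (n + 1)) * P n).natDegree + 1 < n + 2 := by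
      have := natDegree_C_mul_le (b (n + 1)) (P n); omega
    rw [hP.succ (n + 1) (by omega) (by omega), Nat.add_sub_cancel]
    refine ⟨hmon.sub_of_left (degree_lt_degree (by omega)),
      (natDegree_sub_eq_left_of_natDegree_lt (by omega)).trans hdeg, ?_⟩
    rw [nextCoeff_sub_of_natDegree_add_one_lt (hdeg ▸ hlow),
      (monic_X_sub_C _).nextCoeff_mul hmon₁, nextCoeff_X_sub_C, hnext₁, sum_range_succ _ (n + 1)]
    ring

end IsMonicRecurrence

namespace IsJacobiRecurrence

theorem normalize {R : Type*} [CommRing R] {M : ℕ} {v c : ℕ → R} {ψ : ℕ → R[X]}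
    (hψ : IsJacobiRecurrence M v c ψ) :
    IsMonicRecurrence M v (fun n => c (n - 1) ^ 2) (fun n => C (∏ k ∈ range n, c k) * ψ n) where
  zero := by simp [hψ.zero]
  one := by simp [hψ.one, hψ.zero]
  succ n h1 hM := by
    obtain ⟨m, rfl⟩ : ∃ m, n = m + 1 := ⟨n - 1, by omega⟩
    have := hψ.succ (m + 1) h1 hM
    simp only [Nat.add_sub_cancel] at this ⊢
    rw [prod_range_succ _ (m + 1), C_mul, mul_assoc, this, prod_range_succ]
    simp only [C_mul, C_pow]
    ring

theorem coeff_pred_div_coeff {K : Type*} [Field K] {M : ℕ} {v c : ℕ → K} {ψ : ℕ → K[X]}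
    (hψ : IsJacobiRecurrence M v c ψ) (hc : ∀ k ≤ M, c k ≠ 0) {n : ℕ} (h1 : 1 ≤ n)
    (hn : n ≤ M + 1) :
    (ψ n).coeff (n - 1) / (ψ n).coeff n = -∑ k ∈ range n, v k := by
  obtain ⟨hmon, hdeg, hnext⟩ := hψ.normalize.monic_natDegree_nextCoeff hn
  have hprod : ∏ k ∈ range n, c k ≠ 0 :=
    prod_ne_zero_iff.mpr fun k hk => hc k (by rw [mem_range] at hk; omega)
  have hlead : (C (∏ k ∈ range n, c k) * ψ n).coeff n = 1 := by
    simpa only [hdeg] using hmon.coeff_natDegree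
  rw [← mul_div_mul_left _ _ hprod, ← coeff_C_mul, ← coeff_C_mul, hlead, div_one, ← hnext,
    nextCoeff_of_natDegree_pos (by omega), hdeg]

end IsJacobiRecurrence

theorem Matrix.trace_eq_sum_of_injective_mem_spectrum {ι K : Type*} [Fintype ι] [DecidableEq ι]
    [Field K] {A : Matrix ι ι K} {γ : ι → K} (hinj : Function.Injective γ)
    (hγ : ∀ i, γ i ∈ spectrum K A) : A.trace = ∑ i, γ i := by
  set m : Multiset K := univ.val.map γ
  have hle : m ≤ A.charpoly.roots := by
    refine (Multiset.le_iff_subset (univ.nodup.map hinj)).mpr fun x hx => ?_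
    obtain ⟨i, -, rfl⟩ := Multiset.mem_map.mp hx
    rw [mem_roots A.charpoly_monic.ne_zero, ← Matrix.mem_spectrum_iff_isRoot_charpoly]
    exact hγ i
  have hcard : Multiset.card A.charpoly.roots ≤ Multiset.card m := by
    simpa [m, Matrix.charpoly_natDegree_eq_dim] using card_roots' A.charpoly
  have hroots : m = A.charpoly.roots := Multiset.eq_of_le_of_card_le hle hcard
  have hsplit : A.charpoly.Splits := by
    rw [splits_iff_card_roots, ← hroots, Matrix.charpoly_natDegree_eq_dim]
    simp [m]
  rw [Matrix.trace_eq_sum_roots_charpoly_of_splits hsplit, ← hroots]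
  rfl

theorem IsJacobiRecurrence.of_backward {R : Type*} [CommRing R] {N : ℕ} {v c : ℕ → R}
    {φ : ℕ → R[X]} (h0 : φ (N - 1) = 1)
    (h1 : C (c (N - 2)) * φ (N - 2) = (X - C (v (N - 1))) * φ (N - 1))
    (h : ∀ n, 1 ≤ n → n ≤ N - 2 →
      C (c (n - 1)) * φ (n - 1) = (X - C (v n)) * φ n - C (c n) * φ (n + 1)) :
    IsJacobiRecurrence (N - 2) (fun k => v (N - 1 - k)) (fun k => c (N - 2 - k))
      (fun k => φ (N - 1 - k)) where
  zero := h0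
  one := h1
  succ m hm hmN := by
    have := h (N - 1 - m) (by omega) (by omega)
    rwa [show N - 1 - (m + 1) = N - 1 - m - 1 by omega, show N - 2 - m = N - 1 - m - 1 by omega,
      show N - 2 - (m - 1) = N - 1 - m by omega, show N - 1 - (m - 1) = N - 1 - m + 1 by omega]

/-- The subleading coefficient ratios `χ₁(n)` of the forward
eigenpolynomials `ψₙ` and `χ₁^σ(n)` of the backward eigenpolynomials `φₙ`
(the latter shifted by `Σ γₛ`, the eigenvalues of the truncated matrix `L₁`)
satisfy `χ₁(n+1) + χ₁^σ(n) = −v₀`. -/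
theorem chi_identity (N : ℕ) (hN : 2 ≤ N)
    (v c : ℕ → ℝ) (hc : ∀ n ≤ N - 2, 0 < c n)
    (ψ φ : ℕ → Polynomial ℝ)
    (hψ0 : ψ 0 = 1)
    (hψ1 : C (c 0) * ψ 1 = (X - C (v 0)) * ψ 0)
    (hψ : ∀ n, 1 ≤ n → n ≤ N - 2 →
      C (c n) * ψ (n + 1) = (X - C (v n)) * ψ n - C (c (n - 1)) * ψ (n - 1))
    (hφ0 : φ (N - 1) = 1)
    (hφ1 : C (c (N - 2)) * φ (N - 2) = (X - C (v (N - 1))) * φ (N - 1))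
    (hφ : ∀ n, 1 ≤ n → n ≤ N - 2 →
      C (c (n - 1)) * φ (n - 1) = (X - C (v n)) * φ n - C (c n) * φ (n + 1))
    (γ : Fin (N - 1) → ℝ) (hγmono : StrictMono γ)
    (hγ : spectrum ℝ
      (Matrix.of (fun i j : Fin (N - 1) =>
        (if (i : ℕ) + 1 = (j : ℕ) + 1 then v ((i : ℕ) + 1) else
          if (i : ℕ) + 1 + 1 = (j : ℕ) + 1 then c ((i : ℕ) + 1) else
          if (j : ℕ) + 1 + 1 = (i : ℕ) + 1 then c ((j : ℕ) + 1) else 0)))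
      = Set.range γ) :
    (let χ₁ : ℕ → ℝ := fun n => (ψ n).coeff (n - 1) / (ψ n).coeff n
    let χ₁σ : ℕ → ℝ := fun n =>
      (φ n).coeff (N - 2 - n) / (φ n).coeff (N - 1 - n) + ∑ s : Fin (N - 1), γ s
    ∀ n ≤ N - 2, χ₁ (n + 1) + χ₁σ n = -v 0) := by
  intro χ₁ χ₁σ n hn
  have hc₀ : ∀ k ≤ N - 2, c k ≠ 0 := fun k hk => (hc k hk).ne'
  have hforward : χ₁ (n + 1) = -∑ k ∈ range (n + 1), v k :=
    (IsJacobiRecurrence.mk hψ0 hψ1 hψ).coeff_pred_div_coeff hc₀ (by omega) (by omega)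
  have hbackward :
      (φ n).coeff (N - 2 - n) / (φ n).coeff (N - 1 - n) = -∑ k ∈ Ico (n + 1) N, v k := by
    have := (IsJacobiRecurrence.of_backward hφ0 hφ1 hφ).coeff_pred_div_coeff
      (fun k hk => hc₀ _ (by omega)) (n := N - 1 - n) (by omega) (by omega)
    rwa [show N - 1 - (N - 1 - n) = n by omega, show N - 1 - n - 1 = N - 2 - n by omega,
      range_eq_Ico, sum_Ico_reflect _ _ (by omega), show N - 1 + 1 - (N - 1 - n) = n + 1 by omega,
      show N - 1 + 1 - 0 = N by omega] at this
  have htrace : ∑ s, γ s = ∑ k ∈ Ico 1 N, v k := by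
    rw [← Matrix.trace_eq_sum_of_injective_mem_spectrum hγmono.injective
      fun i => hγ ▸ Set.mem_range_self i, sum_Ico_eq_sum_range, ← Fin.sum_univ_eq_sum_range]
    simp [Matrix.trace, add_comm]
  show χ₁ (n + 1) + ((φ n).coeff (N - 2 - n) / (φ n).coeff (N - 1 - n) + ∑ s, γ s) = -v 0
  rw [hforward, hbackward, htrace]
  have hsplit := sum_range_add_sum_Ico v (show n + 1 ≤ N by omega)
  have hsplit₁ := sum_range_add_sum_Ico v (show 1 ≤ N by omega)
  simp only [sum_range_one] at hsplit₁
  linarith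
end

section
/- Let N ≥ 2 and let U ⊂ ℝ^N × ℝ^{N−1} be the open set of points (E_1,…,E_N, γ_1,…,γ_{N−1}) with E_k ≠ γ_s for all k, s. On U define the smooth functions w_s(E,γ) = Π_{k=1}^N (γ_s − E_k) for s = 1,…,N−1 and r_k(E,γ) = Π_{s=1}^{N−1}(E_k − γ_s) for k = 1,…,N. Then the differential 2-forms Σ_{s=1}^{N−1} (dw_s / w_s) ∧ dγ_s and Σ_{k=1}^{N} (dr_k / r_k) ∧ dE_k are both equal on U to Σ_{k=1}^{N} Σ_{s=1}^{N−1} (E_k − γ_s)^{−1} dE_k ∧ dγ_s; in particular Σ_s (dw_s/w_s) ∧ dγ_s = Σ_k (dr_k/r_k) ∧ dE_k. -/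
/-! The logarithmic differential of a product of linear factors is the sum of the logarithmic
differentials of the factors: `dw_s / w_s = Σ_k d(E_k - γ_s) / (E_k - γ_s)` and
`dr_k / r_k = Σ_s d(E_k - γ_s) / (E_k - γ_s)`. Wedging with `dγ_s`, resp. `dE_k`, kills
`dγ_s ∧ dγ_s`, resp. `dE_k ∧ dE_k`, and both sides become `Σ_{k,s} (E_k - γ_s)⁻¹ dE_k ∧ dγ_s`. -/

open ContinuousLinearMap

theorem fderiv_prod_apply_div_prod {𝕜 ι E : Type*} [NontriviallyNormedField 𝕜] [DecidableEq ι]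
    [NormedAddCommGroup E] [NormedSpace 𝕜 E] {s : Finset ι} {g : ι → E → 𝕜} {g' : ι → E →L[𝕜] 𝕜}
    {x : E} (hg : ∀ i ∈ s, HasFDerivAt (g i) (g' i) x) (hne : ∀ i ∈ s, g i x ≠ 0) (v : E) :
    fderiv 𝕜 (fun y => ∏ i ∈ s, g i y) x v / ∏ i ∈ s, g i x = ∑ i ∈ s, g' i v / g i x := by
  rw [(HasFDerivAt.finsetProd hg).fderiv, sum_apply, Finset.sum_div]
  refine Finset.sum_congr rfl fun i hi => ?_
  have hrest : ∏ j ∈ s.erase i, g j x ≠ 0 :=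
    Finset.prod_ne_zero_iff.mpr fun j hj => hne j (Finset.mem_of_mem_erase hj)
  rw [smul_apply, smul_eq_mul, ← Finset.mul_prod_erase s (g · x) hi, mul_comm (g i x),
    mul_div_mul_left _ _ hrest]

theorem fderiv_prod_sub_div_prod {𝕜 ι E : Type*} [NontriviallyNormedField 𝕜] [Fintype ι]
    [NormedAddCommGroup E] [NormedSpace 𝕜 E] (a : E →L[𝕜] 𝕜) (b : ι → E →L[𝕜] 𝕜) {x : E}
    (hx : ∀ i, a x ≠ b i x) (v : E) :
    fderiv 𝕜 (fun y => ∏ i, (a y - b i y)) x v / ∏ i, (a x - b i x)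
      = ∑ i, (a v - b i v) / (a x - b i x) := by
  classical
  exact fderiv_prod_apply_div_prod (g := fun i y => a y - b i y) (g' := fun i => a - b i)
    (fun i _ => (a - b i).hasFDerivAt) (fun i _ => sub_ne_zero.mpr (hx i)) v

theorem darboux_two_form_identity_general (N : ℕ) :
    (let w : Fin (N - 1) → ((Fin N → ℝ) × (Fin (N - 1) → ℝ)) → ℝ := fun s x =>
      ∏ k : Fin N, (x.2 s - x.1 k)
    let r : Fin N → ((Fin N → ℝ) × (Fin (N - 1) → ℝ)) → ℝ := fun k x =>
      ∏ s : Fin (N - 1), (x.1 k - x.2 s)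
    ∀ x : (Fin N → ℝ) × (Fin (N - 1) → ℝ),
      (∀ (k : Fin N) (s : Fin (N - 1)), x.1 k ≠ x.2 s) →
      ∀ u t : (Fin N → ℝ) × (Fin (N - 1) → ℝ),
        (∑ s : Fin (N - 1),
            ((fderiv ℝ (w s) x u) / w s x * t.2 s -
              (fderiv ℝ (w s) x t) / w s x * u.2 s)
          = ∑ k : Fin N, ∑ s : Fin (N - 1),
              (x.1 k - x.2 s)⁻¹ * (u.1 k * t.2 s - t.1 k * u.2 s)) ∧
        (∑ k : Fin N,
            ((fderiv ℝ (r k) x u) / r k x * t.1 k -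
              (fderiv ℝ (r k) x t) / r k x * u.1 k)
          = ∑ k : Fin N, ∑ s : Fin (N - 1),
              (x.1 k - x.2 s)⁻¹ * (u.1 k * t.2 s - t.1 k * u.2 s)) ∧
        (∑ s : Fin (N - 1),
            ((fderiv ℝ (w s) x u) / w s x * t.2 s -
              (fderiv ℝ (w s) x t) / w s x * u.2 s)
          = ∑ k : Fin N,
              ((fderiv ℝ (r k) x u) / r k x * t.1 k -
                (fderiv ℝ (r k) x t) / r k x * u.1 k))) := by
  intro w r x hx u t
  let E (k : Fin N) := (proj k).comp (fst ℝ (Fin N → ℝ) (Fin (N - 1) → ℝ))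
  let γ (s : Fin (N - 1)) := (proj s).comp (snd ℝ (Fin N → ℝ) (Fin (N - 1) → ℝ))
  have hw (s : Fin (N - 1)) (v) :
      fderiv ℝ (w s) x v / w s x = ∑ k, (v.1 k - v.2 s) / (x.1 k - x.2 s) := by
    simp only [← neg_sub (v.2 s), ← neg_sub (x.2 s), neg_div_neg_eq]
    exact fderiv_prod_sub_div_prod (γ s) E (fun k => (hx k s).symm) v
  have hr (k : Fin N) (v) :
      fderiv ℝ (r k) x v / r k x = ∑ s, (v.1 k - v.2 s) / (x.1 k - x.2 s) :=
    fderiv_prod_sub_div_prod (E k) γ (hx k) v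
  have hW : ∑ s, (fderiv ℝ (w s) x u / w s x * t.2 s - fderiv ℝ (w s) x t / w s x * u.2 s)
      = ∑ k, ∑ s, (x.1 k - x.2 s)⁻¹ * (u.1 k * t.2 s - t.1 k * u.2 s) := by
    simp only [hw, Finset.sum_mul, ← Finset.sum_sub_distrib]
    rw [Finset.sum_comm]
    congr! 2
    ring
  have hR : ∑ k, (fderiv ℝ (r k) x u / r k x * t.1 k - fderiv ℝ (r k) x t / r k x * u.1 k)
      = ∑ k, ∑ s, (x.1 k - x.2 s)⁻¹ * (u.1 k * t.2 s - t.1 k * u.2 s) := by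
    simp only [hr, Finset.sum_mul, ← Finset.sum_sub_distrib]
    congr! 2
    ring
  exact ⟨hW, hR, hW.trans hR.symm⟩

/-- On the open set where `E_k ≠ γ_s` for all `k, s`, the 2-forms
`Σ_s (dw_s/w_s) ∧ dγ_s` and `Σ_k (dr_k/r_k) ∧ dE_k` both equal
`Σ_{k,s} (E_k − γ_s)⁻¹ dE_k ∧ dγ_s`; in particular they are equal to each
other.  The forms are evaluated as antisymmetric bilinear forms on pairs of
tangent vectors `u, t` at every point `x` of `U`, with
`(α ∧ β)(u,t) = α(u)β(t) − α(t)β(u)` and `df(u) = (fderiv ℝ f x) u`. -/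
theorem darboux_two_form_identity (N : ℕ) (hN : 2 ≤ N) :
    (let w : Fin (N - 1) → ((Fin N → ℝ) × (Fin (N - 1) → ℝ)) → ℝ := fun s x =>
      ∏ k : Fin N, (x.2 s - x.1 k)
    let r : Fin N → ((Fin N → ℝ) × (Fin (N - 1) → ℝ)) → ℝ := fun k x =>
      ∏ s : Fin (N - 1), (x.1 k - x.2 s)
    ∀ x : (Fin N → ℝ) × (Fin (N - 1) → ℝ),
      (∀ (k : Fin N) (s : Fin (N - 1)), x.1 k ≠ x.2 s) →
      ∀ u t : (Fin N → ℝ) × (Fin (N - 1) → ℝ),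
        (∑ s : Fin (N - 1),
            ((fderiv ℝ (w s) x u) / w s x * t.2 s -
              (fderiv ℝ (w s) x t) / w s x * u.2 s)
          = ∑ k : Fin N, ∑ s : Fin (N - 1),
              (x.1 k - x.2 s)⁻¹ * (u.1 k * t.2 s - t.1 k * u.2 s)) ∧
        (∑ k : Fin N,
            ((fderiv ℝ (r k) x u) / r k x * t.1 k -
              (fderiv ℝ (r k) x t) / r k x * u.1 k)
          = ∑ k : Fin N, ∑ s : Fin (N - 1),
              (x.1 k - x.2 s)⁻¹ * (u.1 k * t.2 s - t.1 k * u.2 s)) ∧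
        (∑ s : Fin (N - 1),
            ((fderiv ℝ (w s) x u) / w s x * t.2 s -
              (fderiv ℝ (w s) x t) / w s x * u.2 s)
          = ∑ k : Fin N,
              ((fderiv ℝ (r k) x u) / r k x * t.1 k -
                (fderiv ℝ (r k) x t) / r k x * u.1 k))) :=
  darboux_two_form_identity_general N
end
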